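/- arXiv:2401.07091 — 2 statements merged into one kernel-verified Lean document; each statement's English description precedes it below -/
import Mathlib

section
/- The k-clustering C_SL produced by the single-linkage algorithm on (X, dist) maximizes the MST spacing: for every k-clustering C of X, MST-Sp(C_SL) ≥ MST-Sp(C). -/
open scoped Classical

namespace ClusterSpacing

variable {X : Type*}

/-- The spacing between two groups: the minimum (infimum) distance between a
point of `A` and a point of `B`. -/
noncomputable def spacing (dist : X → X → ℝ) (A B : Set X) : ℝ :=
  sInf {d : ℝ | ∃ x ∈ A, ∃ y ∈ B, d = dist x y}

/-- The weight of an (unordered) edge between two groups. For symmetric `dist`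
this coincides with `spacing`. -/
noncomputable def edgeWeight (dist : X → X → ℝ) : Sym2 (Set X) → ℝ :=
  Sym2.lift ⟨fun A B =>
    sInf ({d : ℝ | ∃ x ∈ A, ∃ y ∈ B, d = dist x y} ∪
          {d : ℝ | ∃ x ∈ B, ∃ y ∈ A, d = dist x y}),
    fun A B => by beta_reduce; rw [Set.union_comm]⟩

/-- A clustering of `X`: a partition of `X` into nonempty groups. -/
def IsClustering (𝒞 : Set (Set X)) : Prop :=
  (∀ A ∈ 𝒞, A.Nonempty) ∧ ⋃₀ 𝒞 = Set.univ ∧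
    ∀ A ∈ 𝒞, ∀ B ∈ 𝒞, A ≠ B → Disjoint A B

/-- The minimum spacing of a clustering: the minimum spacing over pairs of
distinct groups. -/
noncomputable def MinSp (dist : X → X → ℝ) (𝒞 : Set (Set X)) : ℝ :=
  sInf {d : ℝ | ∃ A ∈ 𝒞, ∃ B ∈ 𝒞, A ≠ B ∧ d = spacing dist A B}

/-- Total weight of (the edges of) a graph on the groups of a clustering. -/
noncomputable def treeCost (dist : X → X → ℝ) (𝒞 : Set (Set X))
    (T : SimpleGraph {A : Set X // A ∈ 𝒞}) : ℝ :=
  ∑ᶠ e ∈ T.edgeSet, edgeWeight dist (Sym2.map Subtype.val e)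

/-- The MST spacing of a clustering: the minimum, over all spanning trees of the
complete graph on the groups, of the total edge weight. -/
noncomputable def MSTSp (dist : X → X → ℝ) (𝒞 : Set (Set X)) : ℝ :=
  sInf {c : ℝ | ∃ T : SimpleGraph {A : Set X // A ∈ 𝒞}, T.IsTree ∧ treeCost dist 𝒞 T = c}

/-- `T` is a minimum spanning tree of the complete graph `G_𝒞` on the groups of `𝒞`. -/
def IsMST (dist : X → X → ℝ) (𝒞 : Set (Set X))
    (T : SimpleGraph {A : Set X // A ∈ 𝒞}) : Prop :=
  T.IsTree ∧ ∀ T' : SimpleGraph {A : Set X // A ∈ 𝒞}, T'.IsTree →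
    treeCost dist 𝒞 T ≤ treeCost dist 𝒞 T'

/-- `SingleLinkage dist t 𝒟` holds iff `𝒟` is the collection of groups present
after `t` merging steps of the single-linkage algorithm. -/
inductive SingleLinkage (dist : X → X → ℝ) : ℕ → Set (Set X) → Prop
  | zero : SingleLinkage dist 0 {A : Set X | ∃ x : X, A = {x}}
  | succ (t : ℕ) (𝒟 : Set (Set X)) (A B : Set X) :
      SingleLinkage dist t 𝒟 → A ∈ 𝒟 → B ∈ 𝒟 → A ≠ B →
      (∀ A' ∈ 𝒟, ∀ B' ∈ 𝒟, A' ≠ B' → spacing dist A B ≤ spacing dist A' B') →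
      SingleLinkage dist (t + 1) (insert (A ∪ B) (𝒟 \ {A, B}))

/-- The list of edge weights of a graph on the groups of a clustering, sorted
in nondecreasing order. -/
noncomputable def edgeWeightsSorted [Fintype X] (dist : X → X → ℝ) (𝒞 : Set (Set X))
    (T : SimpleGraph {A : Set X // A ∈ 𝒞}) : List ℝ :=
  Multiset.sort
    ((T.edgeSet.toFinite.toFinset.val).map (fun e => edgeWeight dist (Sym2.map Subtype.val e)))
    (· ≤ ·)

/-!
Call a pair of points *short* for a clustering if it is no longer than every pair that the
clustering separates. Single linkage always merges along a pair realising the minimum spacing,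
which is short, so every single-linkage group stays connected by short pairs. Given a spanning
tree `T'` on the single-linkage groups, realise each of its `k - 1` edges by a closest pair.
These pairs together with all short pairs connect `X`, so their images connect any other
`k`-clustering `𝒞`, and a spanning tree of `𝒞` can be chosen on `k - 1` of them. Short pairs
are no longer than the pairs realising `T'`, so exchanging them one for one shows that this
tree costs at most as much as `T'`.
-/

open SimpleGraph Finset Function

theorem _root_.SimpleGraph.Reachable.lift {V W : Type*} {G : SimpleGraph V} {H : SimpleGraph W}
    (f : V → W) (hf : ∀ ⦃x y⦄, G.Adj x y → H.Reachable (f x) (f y)) {x y : V}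
    (h : G.Reachable x y) : H.Reachable (f x) (f y) := by
  rw [reachable_iff_reflTransGen] at h ⊢
  exact h.lift' f fun a b hab => (reachable_iff_reflTransGen _ _).mp (hf hab)

theorem sum_le_sum_of_card_eq {α : Type*} (w : α → ℝ) {S R : Finset α} (hcard : #S = #R)
    (hSR : ∀ s ∈ S, ∀ r ∈ R, w s ≤ w r) : ∑ s ∈ S, w s ≤ ∑ r ∈ R, w r := by
  rcases S.eq_empty_or_nonempty with rfl | hS
  · rw [card_empty, eq_comm, card_eq_zero] at hcard
    simp [hcard]
  calc ∑ s ∈ S, w s ≤ #S • S.sup' hS w := sum_le_card_nsmul _ _ _ fun s hs => le_sup' w hs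
    _ = #R • S.sup' hS w := by rw [hcard]
    _ ≤ ∑ r ∈ R, w r :=
      card_nsmul_le_sum _ _ _ fun r hr => sup'_le hS w fun s hs => hSR s hs r hr

theorem sum_le_sum_of_subset_union {α : Type*} [DecidableEq α] (w : α → ℝ) {M R S : Finset α}
    (hS : S ⊆ M ∪ R) (hcard : #S = #R) (hMR : ∀ m ∈ M, ∀ r ∈ R, w m ≤ w r) :
    ∑ s ∈ S, w s ≤ ∑ r ∈ R, w r := by
  rw [← sum_inter_add_sum_sdiff S R, ← sum_inter_add_sum_sdiff R S, inter_comm R S]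
  refine add_le_add_right (sum_le_sum_of_card_eq w (card_sdiff_comm hcard) fun s hs r hr => ?_) _
  obtain ⟨hsS, hsR⟩ := mem_sdiff.mp hs
  exact hMR s ((mem_union.mp (hS hsS)).resolve_right hsR) r (mem_sdiff.mp hr).1

section PairGraph

variable {V W : Type*}

def pairGraph (F : Set (V × V)) : SimpleGraph V :=
  fromEdgeSet ((fun p : V × V => s(p.1, p.2)) '' F)

theorem pairGraph_adj {F : Set (V × V)} {x y : V} :
    (pairGraph F).Adj x y ↔ x ≠ y ∧ ((x, y) ∈ F ∨ (y, x) ∈ F) := by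
  simp only [pairGraph, fromEdgeSet_adj, Set.mem_image, Sym2.eq_iff, Prod.exists]
  aesop

theorem pairGraph_mono {F F' : Set (V × V)} (h : F ⊆ F') : pairGraph F ≤ pairGraph F' :=
  fromEdgeSet_mono (Set.image_mono h)

theorem pairGraph_reachable_of_mem {F : Set (V × V)} {p : V × V} (hp : p ∈ F) :
    (pairGraph F).Reachable p.1 p.2 := by
  by_cases h : p.1 = p.2
  · rw [h]
  · exact (pairGraph_adj.mpr ⟨h, Or.inl hp⟩).reachable

theorem connected_pairGraph_image {F : Set (V × V)} (f : V → W) (hf : Surjective f)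
    (h : (pairGraph F).Connected) : (pairGraph (Prod.map f f '' F)).Connected := by
  have := h.nonempty.map f
  refine ⟨fun a b => ?_⟩
  obtain ⟨x, rfl⟩ := hf a
  obtain ⟨y, rfl⟩ := hf b
  refine (h.preconnected x y).lift f fun x y hxy => ?_
  obtain ⟨-, hxy | hyx⟩ := pairGraph_adj.mp hxy
  · exact pairGraph_reachable_of_mem (Set.mem_image_of_mem _ hxy)
  · exact (pairGraph_reachable_of_mem (Set.mem_image_of_mem _ hyx)).symm

theorem connected_pairGraph_of_image {F : Set (V × V)} (f : V → W) (hf : Surjective f)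
    (h : (pairGraph (Prod.map f f '' F)).Connected)
    (hfiber : ∀ x y, f x = f y → (pairGraph F).Reachable x y) : (pairGraph F).Connected := by
  have : Nonempty V := h.nonempty.map (surjInv hf)
  have hsection : ∀ x, (pairGraph F).Reachable x (surjInv hf (f x)) :=
    fun x => hfiber _ _ (surjInv_eq hf _).symm
  have hstep : ∀ p ∈ F, (pairGraph F).Reachable (surjInv hf (f p.1)) (surjInv hf (f p.2)) :=
    fun p hp => ((hsection p.1).symm.trans (pairGraph_reachable_of_mem hp)).trans (hsection p.2)
  refine ⟨fun x y => ?_⟩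
  refine ((hsection x).trans ?_).trans (hsection y).symm
  refine (h.preconnected (f x) (f y)).lift (surjInv hf) fun a b hab => ?_
  obtain ⟨-, ⟨p, hp, hpab⟩ | ⟨p, hp, hpba⟩⟩ := pairGraph_adj.mp hab
  · obtain ⟨rfl, rfl⟩ := Prod.ext_iff.mp hpab
    exact hstep p hp
  · obtain ⟨rfl, rfl⟩ := Prod.ext_iff.mp hpba
    exact (hstep p hp).symm

end PairGraph

section Weights

variable [Finite X] (dist : X → X → ℝ)

theorem finite_dists (A B : Set X) : {d : ℝ | ∃ x ∈ A, ∃ y ∈ B, d = dist x y}.Finite :=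
  (Set.finite_range fun p : X × X => dist p.1 p.2).subset <| by
    rintro d ⟨x, -, y, -, rfl⟩
    exact ⟨(x, y), rfl⟩

theorem spacing_le {A B : Set X} {x y : X} (hx : x ∈ A) (hy : y ∈ B) :
    spacing dist A B ≤ dist x y :=
  csInf_le (finite_dists dist A B).bddBelow ⟨x, hx, y, hy, rfl⟩

theorem exists_spacing_eq {A B : Set X} (hA : A.Nonempty) (hB : B.Nonempty) :
    ∃ x ∈ A, ∃ y ∈ B, spacing dist A B = dist x y := by
  obtain ⟨x, hx⟩ := hA
  obtain ⟨y, hy⟩ := hB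
  exact Set.Nonempty.csInf_mem (s := {d | ∃ x ∈ A, ∃ y ∈ B, d = dist x y})
    ⟨_, x, hx, y, hy, rfl⟩ (finite_dists dist A B)

theorem edgeWeight_le {A B : Set X} {x y : X} (hx : x ∈ A) (hy : y ∈ B) :
    edgeWeight dist s(A, B) ≤ dist x y := by
  rw [edgeWeight, Sym2.lift_mk]
  exact csInf_le ((finite_dists dist A B).union (finite_dists dist B A)).bddBelow
    (Or.inl ⟨x, hx, y, hy, rfl⟩)

theorem exists_edgeWeight_eq {A B : Set X} (hA : A.Nonempty) (hB : B.Nonempty) :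
    ∃ x y, (x ∈ A ∧ y ∈ B ∨ x ∈ B ∧ y ∈ A) ∧ edgeWeight dist s(A, B) = dist x y := by
  obtain ⟨x, hx⟩ := hA
  obtain ⟨y, hy⟩ := hB
  rw [edgeWeight, Sym2.lift_mk]
  obtain ⟨a, ha, b, hb, h⟩ | ⟨a, ha, b, hb, h⟩ := Set.Nonempty.csInf_mem
    ⟨dist x y, Or.inl ⟨x, hx, y, hy, rfl⟩⟩ ((finite_dists dist A B).union (finite_dists dist B A))
  · exact ⟨a, b, Or.inl ⟨ha, hb⟩, h⟩
  · exact ⟨a, b, Or.inr ⟨ha, hb⟩, h⟩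

end Weights

namespace IsClustering

variable {𝒞 : Set (Set X)}

theorem exists_mem (h : IsClustering 𝒞) (x : X) : ∃ A ∈ 𝒞, x ∈ A :=
  Set.mem_sUnion.mp (h.2.1 ▸ Set.mem_univ x)

theorem eq_of_mem (h : IsClustering 𝒞) {A B : Set X} {x : X} (hA : A ∈ 𝒞) (hB : B ∈ 𝒞)
    (hxA : x ∈ A) (hxB : x ∈ B) : A = B :=
  by_contra fun hAB => Set.disjoint_left.mp (h.2.2 A hA B hB hAB) hxA hxB

noncomputable def groupOf (h : IsClustering 𝒞) (x : X) : {A // A ∈ 𝒞} :=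
  ⟨(h.exists_mem x).choose, (h.exists_mem x).choose_spec.1⟩

theorem mem_groupOf (h : IsClustering 𝒞) (x : X) : x ∈ (h.groupOf x).1 :=
  (h.exists_mem x).choose_spec.2

theorem groupOf_eq (h : IsClustering 𝒞) {C : {A // A ∈ 𝒞}} {x : X} (hx : x ∈ C.1) :
    h.groupOf x = C :=
  Subtype.ext (h.eq_of_mem (h.groupOf x).2 C.2 (h.mem_groupOf x) hx)

theorem groupOf_surjective (h : IsClustering 𝒞) : Surjective h.groupOf := fun C =>
  (h.1 C.1 C.2).elim fun x hx => ⟨x, h.groupOf_eq hx⟩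

variable {A B : Set X}

theorem exists_superset_mem_merge {D : Set X} (hD : D ∈ 𝒞) :
    ∃ D' ∈ insert (A ∪ B) (𝒞 \ {A, B}), D ⊆ D' := by
  by_cases hDAB : D = A ∨ D = B
  · refine ⟨A ∪ B, Set.mem_insert _ _, ?_⟩
    rcases hDAB with rfl | rfl
    exacts [Set.subset_union_left, Set.subset_union_right]
  · exact ⟨D, Set.mem_insert_of_mem _ ⟨hD, by simpa using hDAB⟩, subset_rfl⟩

theorem merge (h : IsClustering 𝒞) (hA : A ∈ 𝒞) (hB : B ∈ 𝒞) :
    IsClustering (insert (A ∪ B) (𝒞 \ {A, B})) := by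
  obtain ⟨hne, hcover, hdisj⟩ := h
  have hdisj_union : ∀ D ∈ 𝒞 \ {A, B}, Disjoint (A ∪ B) D := by
    rintro D ⟨hD, hDAB⟩
    simp only [Set.mem_insert_iff, Set.mem_singleton_iff, not_or] at hDAB
    exact Set.disjoint_union_left.mpr
      ⟨hdisj A hA D hD (Ne.symm hDAB.1), hdisj B hB D hD (Ne.symm hDAB.2)⟩
  refine ⟨?_, ?_, ?_⟩
  · rintro D (rfl | ⟨hD, -⟩)
    exacts [(hne A hA).mono Set.subset_union_left, hne D hD]
  · refine Set.eq_univ_of_forall fun x => ?_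
    obtain ⟨D, hD, hxD⟩ := Set.mem_sUnion.mp (hcover ▸ Set.mem_univ x)
    obtain ⟨D', hD', hDD'⟩ := exists_superset_mem_merge hD
    exact ⟨D', hD', hDD' hxD⟩
  · rintro C (rfl | hC) D (rfl | hD) hCD
    exacts [absurd rfl hCD, hdisj_union D hD, (hdisj_union C hC).symm,
      hdisj C hC.1 D hD.1 hCD]

theorem ncard_merge [Finite X] (h : IsClustering 𝒞) (hA : A ∈ 𝒞) (hB : B ∈ 𝒞) (hAB : A ≠ B) :
    (insert (A ∪ B) (𝒞 \ {A, B})).ncard + 1 = 𝒞.ncard := by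
  have hsub : {A, B} ⊆ 𝒞 := Set.insert_subset hA (Set.singleton_subset_iff.mpr hB)
  have hnotMem : A ∪ B ∉ 𝒞 \ {A, B} := by
    rintro ⟨hD, hDAB⟩
    simp only [Set.mem_insert_iff, Set.mem_singleton_iff, not_or] at hDAB
    obtain ⟨a, ha⟩ := h.1 A hA
    exact hDAB.1 (h.eq_of_mem hD hA (Or.inl ha) ha)
  have htwo : 2 ≤ 𝒞.ncard := Set.ncard_pair hAB ▸ Set.ncard_le_ncard hsub
  rw [Set.ncard_insert_of_notMem hnotMem, Set.ncard_sdiff hsub, Set.ncard_pair hAB]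
  omega

end IsClustering

def IsShortPair (dist : X → X → ℝ) (𝒟 : Set (Set X)) (p : X × X) : Prop :=
  ∀ x y, (∀ D ∈ 𝒟, ¬(x ∈ D ∧ y ∈ D)) → dist p.1 p.2 ≤ dist x y

namespace SingleLinkage

variable {dist : X → X → ℝ} {t : ℕ} {𝒟 : Set (Set X)}

theorem isClustering (h : SingleLinkage dist t 𝒟) : IsClustering 𝒟 := by
  induction h with
  | zero =>
    refine ⟨?_, ?_, ?_⟩
    · rintro A ⟨x, rfl⟩
      exact Set.singleton_nonempty x
    · exact Set.eq_univ_of_forall fun x => ⟨{x}, ⟨x, rfl⟩, rfl⟩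
    · rintro A ⟨x, rfl⟩ B ⟨y, rfl⟩ hxy
      exact Set.disjoint_singleton.mpr fun h => hxy (h ▸ rfl)
  | succ _ _ _ _ _ hA hB _ _ ih => exact ih.merge hA hB

theorem ncard_add [Finite X] (h : SingleLinkage dist t 𝒟) : 𝒟.ncard + t = Nat.card X := by
  induction h with
  | zero =>
    have : {A : Set X | ∃ x, A = {x}} = Set.range fun x : X => ({x} : Set X) := by
      ext A
      simp [eq_comm]
    rw [this, Set.ncard_range_of_injective Set.singleton_injective, add_zero]
  | succ _ _ _ _ hSL hA hB hAB _ ih =>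
    rw [← hSL.isClustering.ncard_merge hA hB hAB] at ih
    omega

theorem reachable_of_mem [Finite X] (h : SingleLinkage dist t 𝒟) :
    ∀ D ∈ 𝒟, ∀ x ∈ D, ∀ y ∈ D, (pairGraph {p | IsShortPair dist 𝒟 p}).Reachable x y := by
  induction h with
  | zero =>
    rintro D ⟨z, rfl⟩ x rfl y rfl
    rfl
  | succ _ 𝒟 A B hSL hA hB _ hmin ih =>
    have hcl := hSL.isClustering
    set G := pairGraph {p | IsShortPair dist (insert (A ∪ B) (𝒟 \ {A, B})) p}
    have hmono : pairGraph {p | IsShortPair dist 𝒟 p} ≤ G :=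
      pairGraph_mono fun p hp x y hxy => hp x y fun D hD ⟨hx, hy⟩ => by
        obtain ⟨D', hD', hDD'⟩ := IsClustering.exists_superset_mem_merge hD
        exact hxy D' hD' ⟨hDD' hx, hDD' hy⟩
    obtain ⟨a, ha, b, hb, hab⟩ := exists_spacing_eq dist (hcl.1 A hA) (hcl.1 B hB)
    have hshort : IsShortPair dist 𝒟 (a, b) := fun x y hxy => by
      obtain ⟨Cx, hCx, hxCx⟩ := hcl.exists_mem x
      obtain ⟨Cy, hCy, hyCy⟩ := hcl.exists_mem y
      have hCxy : Cx ≠ Cy := by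
        rintro rfl
        exact hxy Cx hCx ⟨hxCx, hyCy⟩
      calc dist a b = spacing dist A B := hab.symm
        _ ≤ spacing dist Cx Cy := hmin Cx hCx Cy hCy hCxy
        _ ≤ dist x y := spacing_le dist hxCx hyCy
    have hba : G.Reachable b a := (pairGraph_reachable_of_mem hshort).mono hmono |>.symm
    have hto_a : ∀ x ∈ A ∪ B, G.Reachable x a := by
      rintro x (hx | hx)
      · exact (ih A hA x hx a ha).mono hmono
      · exact ((ih B hB x hx b hb).mono hmono).trans hba
    rintro D (rfl | ⟨hD, -⟩) x hx y hy
    · exact (hto_a x hx).trans (hto_a y hy).symm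
    · exact (ih D hD x hx y hy).mono hmono

end SingleLinkage

section Trees

variable (dist : X → X → ℝ) {𝒞 : Set (Set X)}

theorem treeCost_eq_sum [Fintype X] (T : SimpleGraph {A // A ∈ 𝒞}) :
    treeCost dist 𝒞 T = ∑ e ∈ T.edgeFinset, edgeWeight dist (e.map Subtype.val) := by
  rw [treeCost, ← coe_edgeFinset, finsum_mem_coe_finset]

theorem MSTSp_le_treeCost [Finite X] {T : SimpleGraph {A // A ∈ 𝒞}} (hT : T.IsTree) :
    MSTSp dist 𝒞 ≤ treeCost dist 𝒞 T := by
  refine csInf_le ((Set.finite_range (treeCost dist 𝒞)).bddBelow.mono ?_) ⟨T, hT, rfl⟩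
  rintro _ ⟨T, -, rfl⟩
  exact ⟨T, rfl⟩

theorem le_MSTSp [Nonempty {A // A ∈ 𝒞}] {c : ℝ}
    (h : ∀ T : SimpleGraph {A // A ∈ 𝒞}, T.IsTree → c ≤ treeCost dist 𝒞 T) :
    c ≤ MSTSp dist 𝒞 := by
  obtain ⟨T, -, hT⟩ := (connected_top (V := {A // A ∈ 𝒞})).exists_isTree_le
  refine le_csInf ⟨_, T, hT, rfl⟩ ?_
  rintro _ ⟨T, hT, rfl⟩
  exact h T hT

theorem IsClustering.exists_subset_MSTSp_le_sum [Fintype X] (h : IsClustering 𝒞)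
    {F : Finset (X × X)} (hF : (pairGraph (F : Set (X × X))).Connected) :
    ∃ S ⊆ F, #S + 1 = 𝒞.ncard ∧ MSTSp dist 𝒞 ≤ ∑ p ∈ S, dist p.1 p.2 := by
  have := hF.nonempty
  obtain ⟨T, hTF, hT⟩ :=
    (connected_pairGraph_image h.groupOf h.groupOf_surjective hF).exists_isTree_le
  have hlift : ∀ e ∈ T.edgeFinset, ∃ p ∈ F, e = s(h.groupOf p.1, h.groupOf p.2) := by
    intro e he
    have he' := edgeSet_mono hTF (mem_edgeFinset.mp he)
    rw [pairGraph, edgeSet_fromEdgeSet] at he'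
    obtain ⟨⟨_, ⟨p, hp, rfl⟩, rfl⟩, -⟩ := he'
    exact ⟨p, hp, rfl⟩
  choose! φ hφF hφe using hlift
  have hinj : Set.InjOn φ T.edgeFinset := fun e he e' he' hee' =>
    (hφe e he).trans (hee' ▸ hφe e' he').symm
  refine ⟨T.edgeFinset.image φ, image_subset_iff.mpr hφF, ?_, ?_⟩
  · rw [card_image_of_injOn hinj, hT.card_edgeFinset, ← Nat.card_eq_fintype_card,
      Nat.card_coe_set_eq]
  · calc MSTSp dist 𝒞 ≤ treeCost dist 𝒞 T := MSTSp_le_treeCost dist hT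
      _ = ∑ e ∈ T.edgeFinset, edgeWeight dist (e.map Subtype.val) := treeCost_eq_sum dist T
      _ ≤ ∑ e ∈ T.edgeFinset, dist (φ e).1 (φ e).2 := sum_le_sum fun e he => by
        conv_lhs => rw [hφe e he]
        exact edgeWeight_le dist (h.mem_groupOf _) (h.mem_groupOf _)
      _ = _ := (sum_image (f := fun p : X × X => dist p.1 p.2) hinj).symm

theorem IsClustering.exists_finset_sum_eq_treeCost [Fintype X] (h : IsClustering 𝒞)
    (T : SimpleGraph {A // A ∈ 𝒞}) :
    ∃ R : Finset (X × X), #R = #T.edgeFinset ∧ ∑ p ∈ R, dist p.1 p.2 = treeCost dist 𝒞 T ∧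
      (∀ p ∈ R, T.Adj (h.groupOf p.1) (h.groupOf p.2)) ∧
      T ≤ pairGraph (Prod.map h.groupOf h.groupOf '' R) := by
  have hlift : ∀ e : Sym2 {A // A ∈ 𝒞}, ∃ p : X × X, e = s(h.groupOf p.1, h.groupOf p.2) ∧
      edgeWeight dist (e.map Subtype.val) = dist p.1 p.2 := by
    intro e
    induction e using Sym2.ind with | _ C D => ?_
    obtain ⟨x, y, hxy, hw⟩ := exists_edgeWeight_eq dist (h.1 C.1 C.2) (h.1 D.1 D.2)
    refine ⟨(x, y), ?_, hw⟩
    rcases hxy with ⟨hx, hy⟩ | ⟨hx, hy⟩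
    · rw [h.groupOf_eq hx, h.groupOf_eq hy]
    · rw [h.groupOf_eq hx, h.groupOf_eq hy, Sym2.eq_swap]
  choose ψ hψe hψw using hlift
  have hinj : Set.InjOn ψ T.edgeFinset := fun e _ e' _ hee' =>
    (hψe e).trans (hee' ▸ hψe e').symm
  have hadj : ∀ e ∈ T.edgeFinset, T.Adj (h.groupOf (ψ e).1) (h.groupOf (ψ e).2) :=
    fun e he => by
      have he' := mem_edgeFinset.mp he
      rwa [hψe e] at he'
  refine ⟨T.edgeFinset.image ψ, card_image_of_injOn hinj, ?_, ?_, fun C D hCD => ?_⟩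
  · rw [sum_image (f := fun p : X × X => dist p.1 p.2) hinj, treeCost_eq_sum]
    exact sum_congr rfl fun e he => (hψw e).symm
  · simpa only [forall_mem_image] using hadj
  · have he : s(C, D) ∈ T.edgeFinset := mem_edgeFinset.mpr hCD
    have hmem := mem_image_of_mem ψ he
    rcases Sym2.eq_iff.mp (hψe s(C, D)) with ⟨hC, hD⟩ | ⟨hC, hD⟩
    · exact pairGraph_adj.mpr ⟨hCD.ne, Or.inl ⟨_, hmem, Prod.ext hC.symm hD.symm⟩⟩
    · exact pairGraph_adj.mpr ⟨hCD.ne, Or.inr ⟨_, hmem, Prod.ext hD.symm hC.symm⟩⟩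

end Trees

theorem MSTSp_le_treeCost_of_reachable [Fintype X] (dist : X → X → ℝ) {𝒞 𝒟 : Set (Set X)}
    (h𝒞 : IsClustering 𝒞) (h𝒟 : IsClustering 𝒟) (hcard : 𝒞.ncard = 𝒟.ncard)
    (hshort : ∀ D ∈ 𝒟, ∀ x ∈ D, ∀ y ∈ D, (pairGraph {p | IsShortPair dist 𝒟 p}).Reachable x y)
    {T : SimpleGraph {A // A ∈ 𝒟}} (hT : T.IsTree) : MSTSp dist 𝒞 ≤ treeCost dist 𝒟 T := by
  obtain ⟨R, hRcard, hRsum, hRadj, hTR⟩ := h𝒟.exists_finset_sum_eq_treeCost dist T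
  set L := univ.filter (IsShortPair dist 𝒟)
  have hconn : (pairGraph ((L ∪ R : Finset (X × X)) : Set (X × X))).Connected := by
    refine connected_pairGraph_of_image h𝒟.groupOf h𝒟.groupOf_surjective
      (hT.connected.mono (hTR.trans (pairGraph_mono (Set.image_mono ?_)))) fun x y hxy => ?_
    · exact_mod_cast subset_union_right
    · refine (hshort _ (h𝒟.groupOf x).2 x (h𝒟.mem_groupOf x) y (hxy ▸ h𝒟.mem_groupOf y)).mono ?_
      exact pairGraph_mono fun p hp => by simpa [L] using Or.inl hp
  obtain ⟨S, hSsub, hScard, hle⟩ := h𝒞.exists_subset_MSTSp_le_sum dist hconn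
  have hLR : ∀ m ∈ L, ∀ r ∈ R, dist m.1 m.2 ≤ dist r.1 r.2 := by
    refine fun m hm r hr => (mem_filter.mp hm).2 r.1 r.2 fun D hD ⟨h1, h2⟩ => (hRadj r hr).ne ?_
    rw [h𝒟.groupOf_eq (C := ⟨D, hD⟩) h1, h𝒟.groupOf_eq (C := ⟨D, hD⟩) h2]
  have hSR : #S = #R := by
    have := hT.card_edgeFinset
    rw [← Nat.card_eq_fintype_card, Nat.card_coe_set_eq] at this
    omega
  calc MSTSp dist 𝒞 ≤ ∑ p ∈ S, dist p.1 p.2 := hle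
    _ ≤ ∑ r ∈ R, dist r.1 r.2 := sum_le_sum_of_subset_union _ hSsub hSR hLR
    _ = treeCost dist 𝒟 T := hRsum

theorem singleLinkage_maximizes_MSTSp_general {X : Type*} [Fintype X] (dist : X → X → ℝ)
    (k : ℕ) (hk : 2 ≤ k) (hkn : k ≤ Fintype.card X)
    (𝒞SL : Set (Set X)) (hSL : SingleLinkage dist (Fintype.card X - k) 𝒞SL)
    (𝒞 : Set (Set X)) (h𝒞 : IsClustering 𝒞) (h𝒞k : 𝒞.ncard = k) :
    MSTSp dist 𝒞 ≤ MSTSp dist 𝒞SL := by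
  have hcard : 𝒞SL.ncard = k := by
    have := hSL.ncard_add
    rw [Nat.card_eq_fintype_card] at this
    omega
  have : Nonempty {A // A ∈ 𝒞SL} := (Set.nonempty_of_ncard_ne_zero (by omega)).to_subtype
  exact le_MSTSp dist fun T hT => MSTSp_le_treeCost_of_reachable dist h𝒞 hSL.isClustering
    (h𝒞k.trans hcard.symm) hSL.reachable_of_mem hT

theorem singleLinkage_maximizes_MSTSp {X : Type*} [Fintype X] (dist : X → X → ℝ)
    (hsymm : ∀ x y : X, dist x y = dist y x)
    (hpos : ∀ x y : X, x ≠ y → 0 < dist x y)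
    (hdistinct : ∀ x y x' y' : X, x ≠ y → x' ≠ y' → dist x y = dist x' y' →
      (x = x' ∧ y = y') ∨ (x = y' ∧ y = x'))
    (k : ℕ) (hk : 2 ≤ k) (hkn : k ≤ Fintype.card X)
    (𝒞SL : Set (Set X)) (hSL : SingleLinkage dist (Fintype.card X - k) 𝒞SL)
    (𝒞 : Set (Set X)) (h𝒞 : IsClustering 𝒞) (h𝒞k : 𝒞.ncard = k) :
    MSTSp dist 𝒞 ≤ MSTSp dist 𝒞SL :=
  singleLinkage_maximizes_MSTSp_general dist k hk hkn 𝒞SL hSL 𝒞 h𝒞 h𝒞k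

end ClusterSpacing
end

section
/- Let X be a finite set of n points, let k and L be positive integers with k ≥ 2 and n ≥ kL, let 0 < ε < 1, and set ρ = min{n/(kL), 2}. Let A' be a partition of X into ℓ groups, with 1 ≤ ℓ ≤ k, each containing at least (1−ε)L points. Then there exists a partition B of X into exactly k groups, each containing at least ⌊ρ(1−ε)L/2⌋ points, such that every group of B is contained in some group of A'. -/
open scoped Classical

namespace ClusterSpacing

variable {X : Type*}

/-! Put `m = max ⌊ρ(1-ε)L/2⌋ 1`. Since `ρ ≤ 2`, every group `A` of `A'` has at least `m`
points, and it can be cut into any number `q` of pieces of size at least `m` with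
`1 ≤ q ≤ ⌊|A|/m⌋`. These capacities add up to at least `k`: if `m = 1` they add up to
`n ≥ kL`, and otherwise `|A| < 2m⌊|A|/m⌋` while `2mk ≤ ρ(1-ε)Lk ≤ n`. As `ℓ ≤ k`, the numbers
of pieces can then be chosen to add up to exactly `k`. -/

open Finset

theorem _root_.Finset.exists_sum_eq_of_le_of_le {ι : Type*} [DecidableEq ι] (s : Finset ι)
    {l f : ι → ℕ} (hlf : ∀ i ∈ s, l i ≤ f i) {c : ℕ} (hl : ∑ i ∈ s, l i ≤ c)
    (hf : c ≤ ∑ i ∈ s, f i) :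
    ∃ g : ι → ℕ, (∀ i ∈ s, l i ≤ g i ∧ g i ≤ f i) ∧ ∑ i ∈ s, g i = c := by
  induction s using Finset.induction_on generalizing c with
  | empty => exact ⟨0, by simp, by simp_all⟩
  | insert a t ha ih =>
    rw [sum_insert ha] at hl hf
    have hlf_t : ∀ i ∈ t, l i ≤ f i := fun i hi => hlf i (mem_insert_of_mem hi)
    have hlt : ∑ i ∈ t, l i ≤ ∑ i ∈ t, f i := sum_le_sum hlf_t
    have hla := hlf a (mem_insert_self a t)
    set x := max (l a) (c - ∑ i ∈ t, f i)
    obtain ⟨g, hg, hgc⟩ := ih hlf_t (c := c - x) (by omega) (by omega)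
    refine ⟨Function.update g a x, fun i hi => ?_, ?_⟩
    · rcases eq_or_ne i a with rfl | hia
      · simp only [Function.update_self]; omega
      · simpa [hia] using hg i ((mem_insert.1 hi).resolve_left hia)
    · rw [sum_insert ha, Function.update_self, sum_update_of_notMem ha, hgc]
      omega

theorem _root_.Nat.le_two_mul_mul_div {m n : ℕ} (hm : 0 < m) (hmn : m ≤ n) :
    n ≤ 2 * (m * (n / m)) := by
  have hq : m ≤ m * (n / m) := Nat.le_mul_of_pos_right m (Nat.div_pos hmn hm)
  have := Nat.div_add_mod n m
  have := Nat.mod_lt n hm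
  omega

section Finpartition

variable {α : Type*} [DecidableEq α] {s : Finset α} {m : ℕ}

theorem _root_.Finpartition.exists_card_parts_eq_of_mul_le_card (hm : 0 < m) {q : ℕ}
    (hq : 0 < q) (hqs : q * m ≤ #s) :
    ∃ P : Finpartition s, #P.parts = q ∧ ∀ t ∈ P.parts, m ≤ #t := by
  have hdiv : m ≤ #s / q := (Nat.le_div_iff_mul_le hq).2 (by rwa [mul_comm])
  have hmod := Nat.mod_lt #s hq
  have hsplit : (q - #s % q) * (#s / q) + #s % q * (#s / q + 1) = #s := by
    have := Nat.div_add_mod #s q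
    zify [hmod.le] at this ⊢
    linear_combination this
  refine ⟨(⊥ : Finpartition s).equitabilise hsplit, ?_, fun t ht => ?_⟩
  · rw [Finpartition.card_parts_equitabilise _ _ (by omega)]
    omega
  · rcases Finpartition.card_eq_of_mem_parts_equitabilise ht with h | h <;> omega

theorem _root_.Finpartition.exists_le_card_parts_eq (P : Finpartition s) (hm : 0 < m)
    (hP : ∀ t ∈ P.parts, m ≤ #t) {k : ℕ} (hPk : #P.parts ≤ k)
    (hk : k ≤ ∑ t ∈ P.parts, #t / m) :
    ∃ Q : Finpartition s, Q ≤ P ∧ #Q.parts = k ∧ ∀ u ∈ Q.parts, m ≤ #u := by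
  obtain ⟨g, hg, hgk⟩ := P.parts.exists_sum_eq_of_le_of_le (l := fun _ => 1)
    (fun t ht => (Nat.one_le_div_iff hm).2 (hP t ht)) (by simpa using hPk) hk
  have hsplit (t : Finset α) (ht : t ∈ P.parts) :
      ∃ R : Finpartition t, #R.parts = g t ∧ ∀ u ∈ R.parts, m ≤ #u :=
    Finpartition.exists_card_parts_eq_of_mul_le_card hm (hg t ht).1
      ((Nat.mul_le_mul_right m (hg t ht).2).trans (Nat.div_mul_le_self _ _))
  choose R hRcard hRm using hsplit
  refine ⟨P.bind R, fun u hu => ?_, ?_, fun u hu => ?_⟩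
  · obtain ⟨t, ht, hu⟩ := Finpartition.mem_bind.1 hu
    exact ⟨t, ht, (R t ht).le hu⟩
  · rw [Finpartition.card_bind, ← hgk, ← sum_attach P.parts g]
    exact sum_congr rfl fun t _ => hRcard t t.2
  · obtain ⟨t, ht, hu⟩ := Finpartition.mem_bind.1 hu
    exact hRm t ht u hu

theorem _root_.Finpartition.le_sum_card_div (P : Finpartition s) (hm : 0 < m)
    (hP : ∀ t ∈ P.parts, m ≤ #t) {k : ℕ} (hk : 2 * m * k ≤ #s) :
    k ≤ ∑ t ∈ P.parts, #t / m := by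
  have : #s ≤ 2 * m * ∑ t ∈ P.parts, #t / m := by
    rw [← P.sum_card_parts, mul_assoc, mul_sum, mul_sum]
    exact sum_le_sum fun t ht => Nat.le_two_mul_mul_div hm (hP t ht)
  exact le_of_mul_le_mul_left (hk.trans this) (by positivity)

end Finpartition

theorem isClustering_iff_isPartition {𝒞 : Set (Set X)} :
    IsClustering 𝒞 ↔ Setoid.IsPartition 𝒞 := by
  refine ⟨fun ⟨hne, hcover, hdisj⟩ => ?_, fun h => ?_⟩
  · refine Set.PairwiseDisjoint.isPartition_of_exists_of_ne_empty
      (fun A hA B hB hAB => hdisj A hA B hB hAB) (fun x => ?_)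
      (fun h => Set.not_nonempty_empty (hne ∅ h))
    exact Set.mem_sUnion.1 (by rw [hcover]; trivial)
  · exact ⟨fun A hA => Setoid.nonempty_of_mem_partition h hA, h.sUnion_eq_univ,
      fun A hA B hB hAB => h.pairwiseDisjoint hA hB hAB⟩

theorem isClustering_iff_exists_finpartition [Fintype X] {𝒞 : Set (Set X)} :
    IsClustering 𝒞 ↔
      ∃ P : Finpartition (univ : Finset X), (↑) '' (P.parts : Set (Finset X)) = 𝒞 := by
  rw [isClustering_iff_isPartition]
  constructor
  · intro h
    rw [← Set.coe_toFinset 𝒞] at h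
    refine ⟨(h.finpartition.map Fintype.finsetOrderIsoSet.symm).copy (by simp), ?_⟩
    rw [Finpartition.copy_parts, Finpartition.parts_map, Finset.coe_map]
    simp [Set.image_image]
  · rintro ⟨P, rfl⟩
    have := ((P.map Fintype.finsetOrderIsoSet).copy (by simp)).isPartition_parts
    rw [Finpartition.copy_parts, Finpartition.parts_map, Finset.coe_map] at this
    simpa using this

theorem floor_mul_mul_div_two_le {ρ a b : ℝ} (hρ : ρ ≤ 2) (ha : 0 ≤ a) (hb : 0 ≤ b) :
    (⌊ρ * a * b / 2⌋₊ : ℝ) ≤ a * b :=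
  (Nat.cast_le.2 (Nat.floor_mono (by nlinarith [mul_nonneg ha hb]))).trans
    (Nat.floor_le (by positivity))

theorem two_mul_floor_div_two_mul_le {n k L : ℕ} {ρ a : ℝ} (hρ0 : 0 ≤ ρ)
    (hρ : ρ * (k * L) ≤ n) (ha0 : 0 ≤ a) (ha1 : a ≤ 1) :
    2 * ⌊ρ * a * L / 2⌋₊ * k ≤ n := by
  have hfloor : (⌊ρ * a * L / 2⌋₊ : ℝ) ≤ ρ * a * L / 2 := Nat.floor_le (by positivity)
  have ha : ρ * a * (k * L) ≤ ρ * (k * L) :=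
    mul_le_mul_of_nonneg_right (mul_le_of_le_one_right hρ0 ha1) (by positivity)
  exact_mod_cast
    (show (2 * ⌊ρ * a * L / 2⌋₊ * k : ℝ) ≤ n by nlinarith [Nat.cast_nonneg (α := ℝ) k])

theorem exists_balanced_refinement_general {X : Type*} [Fintype X]
    (k L : ℕ) (hk : 2 ≤ k) (hL : 1 ≤ L) (hn : k * L ≤ Fintype.card X)
    (ε : ℝ) (hε0 : 0 < ε) (hε1 : ε < 1)
    (ρ : ℝ) (hρ : ρ = min ((Fintype.card X : ℝ) / (k * L)) 2)
    (ℓ : ℕ) (hℓk : ℓ ≤ k)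
    (𝒜 : Set (Set X)) (h𝒜 : IsClustering 𝒜) (h𝒜c : 𝒜.ncard = ℓ)
    (h𝒜L : ∀ A ∈ 𝒜, (1 - ε) * L ≤ (A.ncard : ℝ)) :
    ∃ ℬ : Set (Set X), IsClustering ℬ ∧ ℬ.ncard = k ∧
      (∀ B ∈ ℬ, ⌊ρ * (1 - ε) * L / 2⌋₊ ≤ B.ncard) ∧
      (∀ B ∈ ℬ, ∃ A ∈ 𝒜, B ⊆ A) := by
  obtain ⟨P, rfl⟩ := isClustering_iff_exists_finpartition.1 h𝒜
  simp only [Set.forall_mem_image, Set.ncard_image_of_injective _ Finset.coe_injective,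
    Set.ncard_coe_finset, Finset.mem_coe] at h𝒜c h𝒜L
  set m₀ := ⌊ρ * (1 - ε) * L / 2⌋₊
  have hρ0 : 0 ≤ ρ := hρ ▸ le_min (by positivity) zero_le_two
  have hρkL : ρ * (k * L) ≤ Fintype.card X :=
    (le_div_iff₀ (by positivity)).1 (hρ ▸ min_le_left _ _)
  have hP : ∀ t ∈ P.parts, max m₀ 1 ≤ #t := fun t ht =>
    max_le (by exact_mod_cast (floor_mul_mul_div_two_le (hρ ▸ min_le_right _ _)
      (by linarith) L.cast_nonneg).trans (h𝒜L ht)) (P.nonempty_of_mem_parts ht).card_pos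
  have hk' : k ≤ ∑ t ∈ P.parts, #t / max m₀ 1 := by
    rcases Nat.eq_zero_or_pos m₀ with h0 | hpos
    · simpa [h0, P.sum_card_parts] using (Nat.le_mul_of_pos_right k hL).trans hn
    · have hmax : max m₀ 1 = m₀ := max_eq_left hpos
      rw [hmax]
      exact P.le_sum_card_div hpos (hmax ▸ hP)
        (two_mul_floor_div_two_mul_le hρ0 hρkL (by linarith) (by linarith))
  obtain ⟨Q, hQP, hQk, hQm⟩ :=
    P.exists_le_card_parts_eq (by positivity) hP (h𝒜c ▸ hℓk) hk'
  refine ⟨_, isClustering_iff_exists_finpartition.2 ⟨Q, rfl⟩, ?_, ?_, ?_⟩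
  · rw [Set.ncard_image_of_injective _ Finset.coe_injective, Set.ncard_coe_finset, hQk]
  · rintro _ ⟨u, hu, rfl⟩
    rw [Set.ncard_coe_finset]
    exact (le_max_left _ _).trans (hQm u hu)
  · rintro _ ⟨u, hu, rfl⟩
    obtain ⟨t, ht, hut⟩ := hQP hu
    exact ⟨t, ⟨t, ht, rfl⟩, Finset.coe_subset.2 hut⟩

theorem exists_balanced_refinement {X : Type*} [Fintype X]
    (k L : ℕ) (hk : 2 ≤ k) (hL : 1 ≤ L) (hn : k * L ≤ Fintype.card X)
    (ε : ℝ) (hε0 : 0 < ε) (hε1 : ε < 1)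
    (ρ : ℝ) (hρ : ρ = min ((Fintype.card X : ℝ) / (k * L)) 2)
    (ℓ : ℕ) (hℓ1 : 1 ≤ ℓ) (hℓk : ℓ ≤ k)
    (𝒜 : Set (Set X)) (h𝒜 : IsClustering 𝒜) (h𝒜c : 𝒜.ncard = ℓ)
    (h𝒜L : ∀ A ∈ 𝒜, (1 - ε) * L ≤ (A.ncard : ℝ)) :
    ∃ ℬ : Set (Set X), IsClustering ℬ ∧ ℬ.ncard = k ∧
      (∀ B ∈ ℬ, ⌊ρ * (1 - ε) * L / 2⌋₊ ≤ B.ncard) ∧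
      (∀ B ∈ ℬ, ∃ A ∈ 𝒜, B ⊆ A) :=
  exists_balanced_refinement_general k L hk hL hn ε hε0 hε1 ρ hρ ℓ hℓk 𝒜 h𝒜 h𝒜c h𝒜L

end ClusterSpacing
end
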